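/- arXiv:2109.10684 — 3 statements merged into one kernel-verified Lean document; each statement's English description precedes it below -/
import Mathlib

section
/- Telescoping identity for composed generating functions: Let f₁,...,f_n be probability generating functions on ℕ₀, each with finite positive mean m_k = f_k'(1), and let ψ_k be the shape function of f_k. Define g_{k,n} = f_{k+1}∘⋯∘f_n for k ≤ n−1 and g_{n,n}(s) = s. Then for all 0 ≤ s < 1, 1/(1 − g_{0,n}(s)) = 1/(m₁⋯m_n (1−s)) + Σ_{k=0}^{n−1} ψ_{k+1}(g_{k+1,n}(s))/(m₁⋯m_k), where the empty product m₁⋯m₀ is 1. -/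
open MeasureTheory ProbabilityTheory Filter Asymptotics Topology

noncomputable section

/-- The probability generating function of a mass function `f` on `ℕ`, evaluated at `s`:
`f(s) = ∑_z s^z f[z]`. -/
def pgfEval (f : ℕ → ℝ) (s : ℝ) : ℝ := ∑' z : ℕ, s ^ z * f z

/-- The mean `f'(1) = ∑_z z f[z]` of a mass function on `ℕ`. -/
def pgfMean (f : ℕ → ℝ) : ℝ := ∑' z : ℕ, (z : ℝ) * f z

/-- The second factorial moment `f''(1) = ∑_z z(z-1) f[z]`. -/
def pgfFact2 (f : ℕ → ℝ) : ℝ := ∑' z : ℕ, (z : ℝ) * ((z : ℝ) - 1) * f z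

/-- The `r`-th moment `∑_z z^r f[z]` of a mass function on `ℕ`. -/
def pgfMom (f : ℕ → ℝ) (r : ℕ) : ℝ := ∑' z : ℕ, (z : ℝ) ^ r * f z

/-- `f` is a probability mass function on `ℕ`. -/
def IsPMF (f : ℕ → ℝ) : Prop := (∀ z, 0 ≤ f z) ∧ Summable f ∧ ∑' z : ℕ, f z = 1

/-- The shape function `ψ` of a probability generating function `f` with mean `m`:
`ψ(s) = 1/(1-f(s)) - 1/(m(1-s))` for `s < 1`, extended by `ψ(1) = f''(1)/(2 f'(1)^2)`. -/
def shapeFun (f : ℕ → ℝ) (s : ℝ) : ℝ :=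
  if s < 1 then 1 / (1 - pgfEval f s) - 1 / (pgfMean f * (1 - s))
  else pgfFact2 f / (2 * (pgfMean f) ^ 2)

/-- Iterated composition of generating functions:
`compEval fs n s = fs 0 (fs 1 (⋯ (fs (n-1) s)⋯))`, `compEval fs 0 s = s`. -/
def compEval : (ℕ → ℕ → ℝ) → ℕ → ℝ → ℝ
  | _, 0, s => s
  | fs, n + 1, s => pgfEval (fs 0) (compEval (fun i => fs (i + 1)) n s)

/-- The density of the inverse gamma distribution with parameters `a, b`. -/
def invGammaPDF (a b x : ℝ) : ℝ :=
  if 0 < x then b ^ a / Real.Gamma a * x ^ (-a - 1) * Real.exp (-b / x) else 0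

/-- The inverse gamma distribution with parameters `a, b`, as a measure on `ℝ`. -/
def invGammaMeasure (a b : ℝ) : Measure ℝ :=
  MeasureTheory.volume.withDensity (fun x => ENNReal.ofReal (invGammaPDF a b x))


lemma summable_pgf (f : ℕ → ℝ) (hpmf : IsPMF f) (s : ℝ) (hs0 : 0 ≤ s) (hs1 : s ≤ 1) :
    Summable (fun z : ℕ => s ^ z * f z) := by
  apply Summable.of_nonneg_of_le (fun z => mul_nonneg (pow_nonneg hs0 z) (hpmf.1 z))
    (fun z => mul_le_of_le_one_left (hpmf.1 z) (pow_le_one₀ hs0 hs1)) hpmf.2.1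

lemma pgfEval_lt_one (f : ℕ → ℝ) (hpmf : IsPMF f)
    (hsum : Summable (fun z : ℕ => (z : ℝ) * f z))
    (hmean : 0 < pgfMean f) (s : ℝ) (hs0 : 0 ≤ s) (hs1 : s < 1) : pgfEval f s < 1 := by
  obtain ⟨z, hz⟩ : ∃ z : ℕ, 0 < (z : ℝ) * f z := by
    by_contra h
    push_neg at h
    have : pgfMean f ≤ 0 := tsum_nonpos h
    linarith
  have hz0 : z ≠ 0 := by rintro rfl; simp at hz
  have hfz : 0 < f z := by
    rcases lt_or_ge 0 (f z) with h | h
    · exact h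
    · nlinarith [Nat.cast_nonneg (α := ℝ) z]
  rw [pgfEval, ← hpmf.2.2]
  refine Summable.tsum_lt_tsum (i := z)
    (fun j => mul_le_of_le_one_left (hpmf.1 j) (pow_le_one₀ hs0 hs1.le)) ?_ ?_ hpmf.2.1
  · have : s ^ z < 1 := pow_lt_one₀ hs0 hs1 hz0
    nlinarith
  · exact summable_pgf f hpmf s hs0 hs1.le

lemma compEval_mem (fs : ℕ → ℕ → ℝ) (n : ℕ)
    (hpmf : ∀ k, IsPMF (fs k))
    (hsum : ∀ k, Summable (fun z : ℕ => (z : ℝ) * fs k z))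
    (hmean : ∀ k, 0 < pgfMean (fs k))
    (s : ℝ) (hs0 : 0 ≤ s) (hs1 : s < 1) :
    0 ≤ compEval fs n s ∧ compEval fs n s < 1 := by
  induction n generalizing fs with
  | zero => exact ⟨hs0, hs1⟩
  | succ n ih =>
    have ht := ih (fun i => fs (i + 1)) (fun k => hpmf _) (fun k => hsum _) (fun k => hmean _)
    constructor
    · show 0 ≤ pgfEval (fs 0) (compEval (fun i => fs (i + 1)) n s)
      exact tsum_nonneg fun z => mul_nonneg (pow_nonneg ht.1 z) ((hpmf 0).1 z)
    · exact pgfEval_lt_one _ (hpmf 0) (hsum 0) (hmean 0) _ ht.1 ht.2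

/-- **Telescoping identity for composed generating functions**: for probability
generating functions `f₁, …, fₙ` (here 0-indexed as `fs 0, …, fs (n-1)`) with finite
positive means `m_k` and shape functions `ψ_k`, and `g_{k,n} = f_{k+1}∘⋯∘f_n`, one has
for `0 ≤ s < 1`:
`1/(1 - g_{0,n}(s)) = 1/(m₁⋯m_n (1-s)) + ∑_{k=0}^{n-1} ψ_{k+1}(g_{k+1,n}(s))/(m₁⋯m_k)`. -/
theorem shape_function_telescoping
    (fs : ℕ → ℕ → ℝ) (n : ℕ)
    (hpmf : ∀ k, IsPMF (fs k))
    (hsum : ∀ k, Summable (fun z : ℕ => (z : ℝ) * fs k z))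
    (hmean : ∀ k, 0 < pgfMean (fs k))
    (s : ℝ) (hs0 : 0 ≤ s) (hs1 : s < 1) :
    1 / (1 - compEval fs n s)
      = 1 / ((∏ i ∈ Finset.range n, pgfMean (fs i)) * (1 - s))
        + ∑ k ∈ Finset.range n,
            shapeFun (fs k) (compEval (fun i => fs (k + 1 + i)) (n - (k + 1)) s)
              / ∏ i ∈ Finset.range k, pgfMean (fs i) := by
  induction n generalizing fs with
  | zero => simp [compEval]
  | succ n ih =>
    have ht := compEval_mem (fun i => fs (i + 1)) n (fun k => hpmf _) (fun k => hsum _)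
      (fun k => hmean _) s hs0 hs1
    set t := compEval (fun i => fs (i + 1)) n s with htdef
    have hce : compEval fs (n + 1) s = pgfEval (fs 0) t := rfl
    have h1 : 1 / (1 - pgfEval (fs 0) t)
        = 1 / (pgfMean (fs 0) * (1 - t)) + shapeFun (fs 0) t := by
      rw [shapeFun, if_pos ht.2]; ring
    have hIH := ih (fun i => fs (i + 1)) (fun k => hpmf _) (fun k => hsum _) (fun k => hmean _)
    rw [hce, h1, Finset.prod_range_succ', Finset.sum_range_succ']
    have h2 : 1 / (pgfMean (fs 0) * (1 - t)) = (1 / (1 - t)) / pgfMean (fs 0) := by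
      rw [div_div, mul_comm]
    rw [h2, hIH, add_div]
    have hterm : ∀ k ∈ Finset.range n,
        (shapeFun (fs (k + 1)) (compEval (fun i => fs (k + 1 + i + 1)) (n - (k + 1)) s)
            / ∏ i ∈ Finset.range k, pgfMean (fs (i + 1))) / pgfMean (fs 0)
        = shapeFun (fs (k + 1)) (compEval (fun i => fs (k + 1 + 1 + i)) (n + 1 - (k + 1 + 1)) s)
            / ∏ i ∈ Finset.range (k + 1), pgfMean (fs i) := by
      intro k hk
      have ha : (fun i => fs (k + 1 + i + 1)) = (fun i => fs (k + 1 + 1 + i)) := by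
        funext i; rw [show k + 1 + i + 1 = k + 1 + 1 + i from by omega]
      have hb : n - (k + 1) = n + 1 - (k + 1 + 1) := by omega
      rw [Finset.prod_range_succ', div_div, ha, hb]
    rw [Finset.sum_div, Finset.sum_congr rfl hterm]
    have h0 : (fun i => fs (0 + 1 + i)) = fun i => fs (i + 1) := by
      funext i; rw [show 0 + 1 + i = i + 1 from by omega]
    have hn : n + 1 - (0 + 1) = n := by omega
    rw [h0, hn]
    simp only [Finset.prod_range_zero, div_one, ← htdef]
    rw [div_div]
    ring
end
end

section
/- Laplace transform of the inverse gamma distribution satisfies a Bessel-type ODE: Let W be inverse gamma distributed with parameters a > 0 and b > 0, and let h(λ) = E[exp(−λW)] for λ ≥ 0 be its Laplace transform. Then h satisfies the second-order differential equation λ h''(λ) = (a−1) h'(λ) + b h(λ) for all λ > 0, with h(0) = 1. -/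
open MeasureTheory ProbabilityTheory Filter Asymptotics Topology

noncomputable section

/-! Up to the constant `c = b ^ a / Γ(a)`, `h(λ) = c ∫₀^∞ x^(-a-1) e^(-λx - b/x) dx`.
Differentiating under the integral sign gives `h' = -c ∫ x^(-a) e^(-λx - b/x)` and
`h'' = c ∫ x^(1-a) e^(-λx - b/x)`. Integrating the derivative of `x^(1-a) e^(-λx - b/x)` over
`(0, ∞)`, where the boundary terms vanish thanks to `e^(-b/x)` at `0` and `e^(-λx)` at `∞`,
yields `λ ∫ x^(1-a) e^(…) = (1-a) ∫ x^(-a) e^(…) + b ∫ x^(-a-1) e^(…)`, which is the ODE.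
The normalisation `h(0) = 1` is the substitution `x = 1/u`, turning the integral into
`Γ(a) / b^a`. -/

open Set Real

section

variable {a b l x : ℝ}

lemma exp_neg_div_le_factorial_div_pow_mul_pow (hb : 0 < b) (hx : 0 < x) (n : ℕ) :
    exp (-b / x) ≤ n.factorial / b ^ n * x ^ n := by
  have hpos : 0 < (b / x) ^ n / n.factorial := by positivity
  calc exp (-b / x) = (exp (b / x))⁻¹ := by rw [neg_div, exp_neg]
    _ ≤ ((b / x) ^ n / n.factorial)⁻¹ :=
      inv_anti₀ hpos (pow_div_factorial_le_exp _ (by positivity) n)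
    _ = n.factorial / b ^ n * x ^ n := by rw [div_pow]; field_simp

lemma integrableOn_rpow_mul_exp_neg_mul_sub_div (hb : 0 < b) (hl : 0 < l) (r : ℝ) :
    IntegrableOn (fun x ↦ x ^ r * exp (-(l * x) - b / x)) (Ioi 0) := by
  obtain ⟨n, hn⟩ := exists_nat_gt (-1 - r)
  have hdom : IntegrableOn (fun x ↦ x ^ (r + n) * exp (-l * x)) (Ioi 0) := by
    simpa using integrableOn_rpow_mul_exp_neg_mul_rpow (p := 1) (by linarith) one_pos hl
  refine (hdom.const_mul (n.factorial / b ^ n)).mono' (by fun_prop) ?_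
  filter_upwards [ae_restrict_mem measurableSet_Ioi] with x (hx : 0 < x)
  rw [norm_of_nonneg (by positivity), sub_eq_add_neg, exp_add, ← neg_div, rpow_add hx,
    rpow_natCast]
  calc x ^ r * (exp (-(l * x)) * exp (-b / x))
      ≤ x ^ r * (exp (-(l * x)) * (n.factorial / b ^ n * x ^ n)) := by
        gcongr; exact exp_neg_div_le_factorial_div_pow_mul_pow hb hx n
    _ = n.factorial / b ^ n * (x ^ r * x ^ n * exp (-l * x)) := by ring_nf

lemma tendsto_rpow_mul_exp_neg_div_nhdsGT_zero (s : ℝ) (hb : 0 < b) :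
    Tendsto (fun x ↦ x ^ s * exp (-b / x)) (𝓝[>] 0) (𝓝 0) := by
  refine ((tendsto_rpow_mul_exp_neg_mul_atTop_nhds_zero (-s) b hb).comp
    tendsto_inv_nhdsGT_zero).congr' ?_
  filter_upwards [self_mem_nhdsWithin] with x (hx : 0 < x)
  simp [inv_rpow hx.le, rpow_neg hx.le, div_eq_mul_inv]

lemma tendsto_rpow_mul_exp_neg_mul_sub_div_nhdsGT_zero (s : ℝ) (hb : 0 < b) :
    Tendsto (fun x ↦ x ^ s * exp (-(l * x) - b / x)) (𝓝[>] 0) (𝓝 0) := by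
  have hexp : Tendsto (fun x : ℝ ↦ exp (-(l * x))) (𝓝[>] 0) (𝓝 1) := by
    simpa using ((continuous_const.mul continuous_id).neg.rexp.tendsto 0).mono_left
      nhdsWithin_le_nhds
  simpa [sub_eq_add_neg, exp_add, neg_div, mul_left_comm] using
    hexp.mul (tendsto_rpow_mul_exp_neg_div_nhdsGT_zero s hb)

lemma tendsto_rpow_mul_exp_neg_mul_sub_div_atTop (s : ℝ) (hl : 0 < l) :
    Tendsto (fun x ↦ x ^ s * exp (-(l * x) - b / x)) atTop (𝓝 0) := by
  have hexp : Tendsto (fun x : ℝ ↦ exp (-b / x)) atTop (𝓝 1) := by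
    simpa [Function.comp_def] using
      (continuous_exp.tendsto 0).comp (tendsto_const_nhds.div_atTop tendsto_id)
  simpa [sub_eq_add_neg, exp_add, neg_div, mul_assoc] using
    (tendsto_rpow_mul_exp_neg_mul_atTop_nhds_zero s l hl).mul hexp

lemma hasDerivAt_exp_neg_mul_sub_div (hx : 0 < x) :
    HasDerivAt (fun x ↦ exp (-(l * x) - b / x)) (exp (-(l * x) - b / x) * (b / x ^ 2 - l)) x := by
  refine HasDerivAt.exp ((((hasDerivAt_id x).const_mul l).neg.sub
    ((hasDerivAt_inv hx.ne').const_mul b)).congr_deriv ?_)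
  field_simp
  ring

/-- The Laplace transform at `l` of `x ^ r * exp (-b / x)` on `(0, ∞)`; up to normalisation,
the inverse gamma law is the case `r = -a - 1`. -/
def laplaceMoment (r b l : ℝ) : ℝ := ∫ x in Ioi 0, x ^ r * exp (-(l * x) - b / x)

lemma hasDerivAt_laplaceMoment (hb : 0 < b) (hl : 0 < l) (r : ℝ) :
    HasDerivAt (laplaceMoment r b) (-laplaceMoment (r + 1) b l) l := by
  have hl2 : 0 < l / 2 := half_pos hl
  have key := hasDerivAt_integral_of_dominated_loc_of_deriv_le (μ := volume.restrict (Ioi 0))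
    (F := fun t x ↦ x ^ r * exp (-(t * x) - b / x))
    (F' := fun t x ↦ -(x ^ (r + 1) * exp (-(t * x) - b / x)))
    (bound := fun x ↦ x ^ (r + 1) * exp (-(l / 2 * x) - b / x))
    (Metric.ball_mem_nhds l hl2) (Eventually.of_forall fun t ↦ by fun_prop)
    (integrableOn_rpow_mul_exp_neg_mul_sub_div hb hl r) (by fun_prop) ?_
    (integrableOn_rpow_mul_exp_neg_mul_sub_div hb hl2 (r + 1)) ?_
  · rw [laplaceMoment, ← integral_neg]
    exact key.2
  · filter_upwards [ae_restrict_mem measurableSet_Ioi] with x (hx : 0 < x) t ht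
    rw [Metric.mem_ball, Real.dist_eq, abs_lt] at ht
    rw [norm_neg, norm_of_nonneg (by positivity)]
    gcongr
    nlinarith
  · filter_upwards [ae_restrict_mem measurableSet_Ioi] with x (hx : 0 < x) t _
    refine ((((hasDerivAt_mul_const (x := t) x).neg.sub_const (b / x)).exp).const_mul
      (x ^ r)).congr_deriv ?_
    simp only [Pi.neg_apply, rpow_add_one hx.ne']
    ring

lemma laplaceMoment_recurrence (hb : 0 < b) (hl : 0 < l) (r : ℝ) :
    l * laplaceMoment (r + 2) b l
      = (r + 2) * laplaceMoment (r + 1) b l + b * laplaceMoment r b l := by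
  set f : ℝ → ℝ → ℝ := fun s x ↦ x ^ s * exp (-(l * x) - b / x) with hf_def
  have hf (s : ℝ) : IntegrableOn (f s) (Ioi 0) :=
    integrableOn_rpow_mul_exp_neg_mul_sub_div hb hl s
  have hu : ∀ x ∈ Ioi (0 : ℝ),
      HasDerivAt (fun x ↦ x ^ (r + 2)) ((r + 2) * x ^ (r + 1)) x := by
    intro x (hx : 0 < x)
    convert hasDerivAt_rpow_const (p := r + 2) (Or.inl hx.ne') using 3
    ring
  have hparts : EqOn (fun x ↦ (r + 2) * x ^ (r + 1) * exp (-(l * x) - b / x)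
        + x ^ (r + 2) * (exp (-(l * x) - b / x) * (b / x ^ 2 - l)))
      (fun x ↦ (r + 2) * f (r + 1) x + b * f r x - l * f (r + 2) x) (Ioi 0) := by
    intro x (hx : 0 < x)
    simp only [hf_def, rpow_add hx, rpow_two]
    field_simp
    ring
  have hint : IntegrableOn (fun x ↦ (r + 2) * f (r + 1) x + b * f r x) (Ioi 0) :=
    ((hf _).const_mul _).add ((hf r).const_mul b)
  have key := integral_Ioi_deriv_mul_eq_sub hu (fun x hx ↦ hasDerivAt_exp_neg_mul_sub_div hx)
    ((hint.sub ((hf (r + 2)).const_mul l)).congr_fun hparts.symm measurableSet_Ioi)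
    (tendsto_rpow_mul_exp_neg_mul_sub_div_nhdsGT_zero (r + 2) hb)
    (tendsto_rpow_mul_exp_neg_mul_sub_div_atTop (r + 2) hl)
  rw [setIntegral_congr_fun measurableSet_Ioi hparts, integral_sub hint ((hf _).const_mul l),
    integral_add ((hf _).const_mul _) ((hf r).const_mul b), integral_const_mul,
    integral_const_mul, integral_const_mul] at key
  simp only [laplaceMoment]
  linear_combination -key

lemma laplaceMoment_zero (ha : 0 < a) (hb : 0 < b) :
    laplaceMoment (-a - 1) b 0 = Gamma a / b ^ a := by
  have hsub := integral_comp_rpow_Ioi (fun u : ℝ ↦ u ^ (a - 1) * exp (-(b * u)))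
    (p := -1) (by norm_num)
  rw [integral_rpow_mul_exp_neg_mul_Ioi ha hb, div_rpow zero_le_one hb.le, one_rpow,
    one_div, inv_mul_eq_div] at hsub
  rw [laplaceMoment, ← hsub]
  refine setIntegral_congr_fun measurableSet_Ioi fun x (hx : 0 < x) ↦ ?_
  rw [smul_eq_mul, ← rpow_mul hx.le, rpow_neg_one, abs_neg, abs_one, one_mul, ← mul_assoc,
    ← rpow_add hx]
  ring_nf

lemma invGammaPDF_nonneg (ha : 0 < a) (hb : 0 < b) (x : ℝ) :
    0 ≤ invGammaPDF a b x := by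
  unfold invGammaPDF
  split_ifs
  · have := Gamma_pos_of_pos ha
    positivity
  · rfl

lemma integral_exp_neg_mul_invGammaMeasure (ha : 0 < a) (hb : 0 < b) (l : ℝ) :
    ∫ x, exp (-(l * x)) ∂invGammaMeasure a b
      = b ^ a / Gamma a * laplaceMoment (-a - 1) b l := by
  have hmeas : Measurable (invGammaPDF a b) := by
    unfold invGammaPDF
    exact Measurable.ite measurableSet_Ioi (by fun_prop) measurable_const
  rw [invGammaMeasure, integral_withDensity_eq_integral_toReal_smul hmeas.ennreal_ofReal
    (ae_of_all _ fun _ ↦ ENNReal.ofReal_lt_top), laplaceMoment, ← integral_const_mul,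
    ← integral_indicator measurableSet_Ioi]
  congr 1 with x
  rw [ENNReal.toReal_ofReal (invGammaPDF_nonneg ha hb x), smul_eq_mul, invGammaPDF]
  by_cases hx : 0 < x
  · rw [if_pos hx, indicator_of_mem (mem_Ioi.mpr hx),
      show -(l * x) - b / x = -b / x + -(l * x) by ring, exp_add]
    ring
  · rw [if_neg hx, indicator_of_notMem (notMem_Ioi.mpr (not_lt.mp hx)), zero_mul]

end

/-- **Laplace transform of the inverse gamma distribution satisfies a Bessel-type
ODE** (Lemma 3): if `W` is inverse gamma distributed with parameters `a > 0`, `b > 0`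
and `h(λ) = E[exp(-λ W)]`, then `h(0) = 1` and
`λ h''(λ) = (a-1) h'(λ) + b h(λ)` for all `λ > 0`. -/
theorem inverse_gamma_laplace_ode
    (a b : ℝ) (ha : 0 < a) (hb : 0 < b)
    (h : ℝ → ℝ)
    (hdef : ∀ l : ℝ, h l = ∫ x, Real.exp (-(l * x)) ∂ invGammaMeasure a b) :
    h 0 = 1 ∧ ∀ l > (0 : ℝ), l * deriv (deriv h) l = (a - 1) * deriv h l + b * h l := by
  set c := b ^ a / Gamma a
  have h_eq : h = fun l ↦ c * laplaceMoment (-a - 1) b l :=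
    funext fun l ↦ (hdef l).trans (integral_exp_neg_mul_invGammaMeasure ha hb l)
  have h_deriv (t : ℝ) (ht : 0 < t) :
      HasDerivAt h (-(c * laplaceMoment (-a - 1 + 1) b t)) t := by
    simpa [h_eq] using (hasDerivAt_laplaceMoment hb ht (-a - 1)).const_mul c
  refine ⟨?_, fun l hl ↦ ?_⟩
  · simp only [h_eq, c, laplaceMoment_zero ha hb]
    have := Gamma_pos_of_pos ha
    field_simp
  · have h_deriv2 : HasDerivAt (deriv h) (c * laplaceMoment (-a - 1 + 2) b l) l := by
      refine (((hasDerivAt_laplaceMoment hb hl (-a - 1 + 1)).const_mul c).neg.congr_deriv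
        ?_).congr_of_eventuallyEq
        (eventually_of_mem (Ioi_mem_nhds hl) fun t ht ↦ (h_deriv t ht).deriv)
      rw [add_assoc, one_add_one_eq_two]
      ring
    rw [h_deriv2.deriv, (h_deriv l hl).deriv, h_eq]
    linear_combination c * laplaceMoment_recurrence hb hl (-a - 1)
end
end

section
/- Expansion of the logarithmic mean of the environment: Let (F'(1))_N be a sequence of positive random variables with ε_N = E[F'(1)] − 1 ≥ 0, ε_N → 0, ν_N = Var(F'(1)) = O(ε_N), and for some δ > 0: E[F'(1)^{−4−δ}] = O(1) and E[|F'(1) − E F'(1)|^{4+δ}] = O(ν_N^{2+δ/2}). Then E[log F'(1)] = ε_N − (1/2) ν_N + o(ε_N) as N → ∞. In particular, if ν_N/ε_N → ρ with ρ > 2, then E[log F'(1)] < 0 for all sufficiently large N. -/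
/-!
Write `c = E M = 1 + ε` and `R(x) = log x - (x - 1) + (x - 1)² / 2` for the remainder of the
second-order Taylor expansion of `log` at `1`. Since `E[(M - 1)²] = ν + ε²`,
`E[log M] - (ε - ν / 2) = E[R(M)] - ε² / 2`. Near `1`, `|R(x)| ≤ 2 |x - 1|³`, while for `x < 1/2`
one has `|R(x)| ≤ 2 / x` and `|x - c| > 1/2`; together
`|R(x)| ≲ |x - c|³ + ε³ + x⁻¹ |x - c|^(3+δ)`. Lyapunov's inequality bounds `E|M - c|³` by
`O(ν^(3/2))`, and Hölder's inequality with exponents `4 + δ` and `(4 + δ)/(3 + δ)` bounds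
`E[M⁻¹ |M - c|^(3+δ)]` by `O(ν^((3+δ)/2))`, using `E[M^(-4-δ)] = O(1)`. Both are `o(ε)` because
`ν = O(ε)` and `ε → 0`.
-/

open MeasureTheory ProbabilityTheory Filter Asymptotics Topology

noncomputable section

def logTaylorRemainder (x : ℝ) : ℝ := Real.log x - ((x - 1) - (x - 1) ^ 2 / 2)

/-- The error term for `E[log M] - (ε - ν / 2)`, in terms of `ε = E M - 1`,
`A = E|M - E M|^p` and `B = E[M^(-p)]`. -/
def logMeanErrorBound (p ε A B : ℝ) : ℝ :=
  ε ^ 2 + 8 * A ^ (3 / p) + 8 * ε ^ 3 + 2 * 2 ^ (p - 1) * (B ^ (1 / p) * A ^ ((p - 1) / p))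

lemma hasDerivAt_logTaylorRemainder {x : ℝ} (hx : x ≠ 0) :
    HasDerivAt logTaylorRemainder ((x - 1) ^ 2 / x) x := by
  have h1 : HasDerivAt (fun y : ℝ => y - 1) 1 x := (hasDerivAt_id x).sub_const 1
  have h2 : HasDerivAt (fun y : ℝ => (y - 1) ^ 2 / 2) (x - 1) x :=
    ((h1.fun_pow 2).div_const 2).congr_deriv (by norm_num)
  exact ((Real.hasDerivAt_log hx).fun_sub (h1.fun_sub h2)).congr_deriv (by field_simp; ring)

lemma abs_logTaylorRemainder_le_of_half_le {x : ℝ} (hx : 1 / 2 ≤ x) :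
    |logTaylorRemainder x| ≤ 2 * |x - 1| ^ 3 := by
  have hseg : ∀ y ∈ Set.uIcc 1 x, 1 / 2 ≤ y ∧ (y - 1) ^ 2 ≤ (x - 1) ^ 2 := by
    intro y hy
    rcases Set.mem_uIcc.mp hy with ⟨h1, h2⟩ | ⟨h1, h2⟩ <;>
      exact ⟨by linarith, by nlinarith⟩
  have hderiv : ∀ y ∈ Set.uIcc 1 x, ‖(y - 1) ^ 2 / y‖ ≤ 2 * (x - 1) ^ 2 := by
    intro y hy
    obtain ⟨hy2, hyx⟩ := hseg y hy
    rw [Real.norm_of_nonneg (by positivity), div_le_iff₀ (by linarith)]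
    nlinarith [sq_nonneg (y - 1)]
  have hmvt := Convex.norm_image_sub_le_of_norm_hasDerivWithin_le (𝕜 := ℝ)
    (f := logTaylorRemainder) (fun y hy => (hasDerivAt_logTaylorRemainder
      (by linarith [(hseg y hy).1] : y ≠ 0)).hasDerivWithinAt) hderiv
    (convex_uIcc 1 x) Set.left_mem_uIcc Set.right_mem_uIcc
  simp only [logTaylorRemainder, Real.log_one, sub_self, ne_eq, OfNat.ofNat_ne_zero,
    not_false_eq_true, zero_pow, zero_div, sub_zero, Real.norm_eq_abs] at hmvt
  calc |logTaylorRemainder x| ≤ 2 * (x - 1) ^ 2 * |x - 1| := hmvt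
    _ = 2 * |x - 1| ^ 3 := by rw [← sq_abs]; ring

lemma abs_logTaylorRemainder_le_of_lt_half {x : ℝ} (hx0 : 0 < x) (hx : x < 1 / 2) :
    |logTaylorRemainder x| ≤ 2 * x⁻¹ := by
  have hlog : Real.log x < 0 := Real.log_neg hx0 (by linarith)
  have hlog' : -Real.log x ≤ x⁻¹ - 1 := by
    simpa [Real.log_inv] using Real.log_le_sub_one_of_pos (inv_pos.mpr hx0)
  have hinv : 2 < x⁻¹ := by
    rw [lt_inv_comm₀ (by norm_num) hx0]; linarith
  unfold logTaylorRemainder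
  rw [abs_le]
  constructor <;> nlinarith

lemma abs_logTaylorRemainder_le {x c r : ℝ} (hx : 0 < x) (hc : 1 ≤ c) (hr : 0 ≤ r) :
    |logTaylorRemainder x| ≤
      8 * |x - c| ^ 3 + 8 * (c - 1) ^ 3 + 2 * 2 ^ r * (x⁻¹ * |x - c| ^ r) := by
  have hfar : 0 ≤ 2 * 2 ^ r * (x⁻¹ * |x - c| ^ r) := by positivity
  rcases le_or_gt (1 / 2) x with hx2 | hx2
  · have htri : |x - 1| ≤ |x - c| + (c - 1) := by
      simpa [abs_of_nonneg (by linarith : 0 ≤ c - 1)] using abs_sub_le x c 1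
    have hcube : (|x - c| + (c - 1)) ^ 3 ≤ 4 * (|x - c| ^ 3 + (c - 1) ^ 3) := by
      nlinarith [mul_nonneg (mul_nonneg (abs_nonneg (x - c)) (by linarith : 0 ≤ c - 1))
        (add_nonneg (abs_nonneg (x - c)) (by linarith : 0 ≤ c - 1)),
        sq_nonneg (|x - c| - (c - 1)), abs_nonneg (x - c)]
    have := pow_le_pow_left₀ (abs_nonneg _) htri 3
    linarith [abs_logTaylorRemainder_le_of_half_le hx2]
  · have hone : (1 : ℝ) ≤ (2 * |x - c|) ^ r := by
      apply Real.one_le_rpow _ hr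
      rw [abs_of_neg (by linarith : x - c < 0)]; linarith
    calc |logTaylorRemainder x| ≤ 2 * x⁻¹ := abs_logTaylorRemainder_le_of_lt_half hx hx2
      _ ≤ 2 * x⁻¹ * (2 * |x - c|) ^ r := le_mul_of_one_le_right (by positivity) hone
      _ = 2 * 2 ^ r * (x⁻¹ * |x - c| ^ r) := by
        rw [Real.mul_rpow (by norm_num) (abs_nonneg _)]; ring
      _ ≤ _ := by
        linarith [pow_nonneg (abs_nonneg (x - c)) 3, pow_nonneg (by linarith : 0 ≤ c - 1) 3]

lemma abs_log_le_add_rpow_neg {x p : ℝ} (hx : 0 < x) (hp : 1 ≤ p) :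
    |Real.log x| ≤ x + x ^ (-p) + 1 := by
  have hrpow : 0 ≤ x ^ (-p) := Real.rpow_nonneg hx.le _
  rcases le_total 1 x with h | h
  · rw [abs_of_nonneg (Real.log_nonneg h)]
    linarith [Real.log_le_sub_one_of_pos hx]
  · have hinv : x⁻¹ ≤ x ^ (-p) := by
      rw [← Real.rpow_neg_one]
      exact Real.rpow_le_rpow_of_exponent_ge hx h (by linarith)
    have := Real.log_le_sub_one_of_pos (inv_pos.mpr hx)
    rw [Real.log_inv] at this
    rw [abs_le]; constructor <;> linarith [Real.log_nonpos hx.le h]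

section Moments

variable {Ω : Type*} [MeasurableSpace Ω] {μ : Measure Ω}

lemma memLp_ofReal_of_integrable_rpow {f : Ω → ℝ} {p : ℝ} (hp : 0 < p) (hf0 : 0 ≤ᵐ[μ] f)
    (hf : AEStronglyMeasurable f μ) (hfp : Integrable (fun ω => f ω ^ p) μ) :
    MemLp f (ENNReal.ofReal p) μ := by
  rw [← integrable_norm_rpow_iff hf (by simpa using hp) ENNReal.ofReal_ne_top,
    ENNReal.toReal_ofReal hp.le]
  refine hfp.congr ?_
  filter_upwards [hf0] with ω h
  rw [Real.norm_of_nonneg h]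

lemma memLp_rpow_sub_one {V : Ω → ℝ} {p : ℝ} (hp : 1 < p) (hV0 : 0 ≤ᵐ[μ] V)
    (hV : AEStronglyMeasurable V μ) (hVp : Integrable (fun ω => V ω ^ p) μ) :
    MemLp (fun ω => V ω ^ (p - 1)) (ENNReal.ofReal p.conjExponent) μ := by
  have hq : 0 < p.conjExponent := (Real.HolderConjugate.conjExponent hp).symm.pos
  refine memLp_ofReal_of_integrable_rpow hq (hV0.mono fun ω h => Real.rpow_nonneg h _)
    (hV.aemeasurable.pow_const _).aestronglyMeasurable (hVp.congr ?_)
  filter_upwards [hV0] with ω h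
  rw [← Real.rpow_mul h, Real.conjExponent, mul_div_cancel₀ _ (by linarith)]

lemma integrable_mul_rpow_sub_one {U V : Ω → ℝ} {p : ℝ} (hp : 1 < p)
    (hU0 : 0 ≤ᵐ[μ] U) (hV0 : 0 ≤ᵐ[μ] V) (hU : AEStronglyMeasurable U μ)
    (hV : AEStronglyMeasurable V μ) (hUp : Integrable (fun ω => U ω ^ p) μ)
    (hVp : Integrable (fun ω => V ω ^ p) μ) :
    Integrable (fun ω => U ω * V ω ^ (p - 1)) μ :=
  have := (Real.HolderConjugate.conjExponent hp).ennrealOfReal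
  (memLp_ofReal_of_integrable_rpow (by linarith) hU0 hU hUp).integrable_mul
    (memLp_rpow_sub_one hp hV0 hV hVp)

lemma integral_mul_rpow_sub_one_le {U V : Ω → ℝ} {p : ℝ} (hp : 1 < p)
    (hU0 : 0 ≤ᵐ[μ] U) (hV0 : 0 ≤ᵐ[μ] V) (hU : AEStronglyMeasurable U μ)
    (hV : AEStronglyMeasurable V μ) (hUp : Integrable (fun ω => U ω ^ p) μ)
    (hVp : Integrable (fun ω => V ω ^ p) μ) :
    ∫ ω, U ω * V ω ^ (p - 1) ∂μ ≤
      (∫ ω, U ω ^ p ∂μ) ^ (1 / p) * (∫ ω, V ω ^ p ∂μ) ^ ((p - 1) / p) := by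
  have hpq := Real.HolderConjugate.conjExponent hp
  have h := integral_mul_le_Lp_mul_Lq_of_nonneg hpq hU0
    (hV0.mono fun ω h => Real.rpow_nonneg h _)
    (memLp_ofReal_of_integrable_rpow (by linarith) hU0 hU hUp)
    (memLp_rpow_sub_one hp hV0 hV hVp)
  have hVq : ∫ ω, (V ω ^ (p - 1)) ^ p.conjExponent ∂μ = ∫ ω, V ω ^ p ∂μ := by
    refine integral_congr_ae ?_
    filter_upwards [hV0] with ω h
    rw [← Real.rpow_mul h, Real.conjExponent, mul_div_cancel₀ _ (by linarith)]
  rwa [hVq, Real.conjExponent, one_div_div] at h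

lemma integral_abs_rpow_le [IsProbabilityMeasure μ] {X : Ω → ℝ} {a b : ℝ} (ha : 0 < a)
    (hab : a ≤ b) (hX : AEStronglyMeasurable X μ) (hXb : Integrable (fun ω => |X ω| ^ b) μ) :
    ∫ ω, |X ω| ^ a ∂μ ≤ (∫ ω, |X ω| ^ b ∂μ) ^ (a / b) := by
  have hb : 0 < b := ha.trans_le hab
  have hXa : Integrable (fun ω => |X ω| ^ a) μ := by
    simpa only [Real.norm_eq_abs] using
      integrable_norm_rpow_of_le hX ha.le hb.le hab (by simpa only [Real.norm_eq_abs] using hXb)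
  have hpow : ∀ ω, (|X ω| ^ a) ^ (b / a) = |X ω| ^ b := fun ω => by
    rw [← Real.rpow_mul (abs_nonneg _), mul_div_cancel₀ _ ha.ne']
  have hjensen := (convexOn_rpow ((one_le_div ha).mpr hab)).map_integral_le
    (Real.continuous_rpow_const (div_pos hb ha).le).continuousOn isClosed_Ici
    (ae_of_all _ fun ω => Real.rpow_nonneg (abs_nonneg (X ω)) a) hXa
    (by simpa only [Function.comp_def, hpow] using hXb)
  simp only [hpow] at hjensen
  calc ∫ ω, |X ω| ^ a ∂μ = ((∫ ω, |X ω| ^ a ∂μ) ^ (b / a)) ^ (a / b) := by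
        rw [← Real.rpow_mul (integral_nonneg fun ω => Real.rpow_nonneg (abs_nonneg _) _),
          show b / a * (a / b) = 1 by field_simp, Real.rpow_one]
    _ ≤ (∫ ω, |X ω| ^ b ∂μ) ^ (a / b) := by gcongr

lemma integrable_log_of_integrable_rpow_neg [IsFiniteMeasure μ] {M : Ω → ℝ} {p : ℝ} (hp : 1 ≤ p)
    (hM : Integrable M μ) (hMpos : ∀ᵐ ω ∂μ, 0 < M ω) (hMp : Integrable (fun ω => M ω ^ (-p)) μ) :
    Integrable (fun ω => Real.log (M ω)) μ := by
  refine ((hM.add hMp).add (integrable_const 1)).mono'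
    (Real.measurable_log.comp_aemeasurable hM.aemeasurable).aestronglyMeasurable ?_
  filter_upwards [hMpos] with ω h
  exact (Real.norm_eq_abs _).trans_le (abs_log_le_add_rpow_neg h hp)

end Moments

section Asymptotics

variable {α : Type*} {l : Filter α} {ε : α → ℝ}

lemma isLittleO_rpow_of_isBigO {w : α → ℝ} {r : ℝ} (hε0 : 0 ≤ᶠ[l] ε)
    (hε : Tendsto ε l (𝓝 0)) (hw : w =O[l] ε) (hr : 1 < r) :
    (fun x => w x ^ r) =o[l] ε := by
  have hsmall : (fun x => ε x ^ (r - 1)) =o[l] (fun _ => (1 : ℝ)) := by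
    rw [isLittleO_one_iff]
    simpa [Real.zero_rpow (by linarith : r - 1 ≠ 0)] using
      hε.rpow_const (Or.inr (by linarith : 0 ≤ r - 1))
  refine (hw.rpow (by linarith) hε0).trans_isLittleO ?_
  refine (hsmall.mul_isBigO (isBigO_refl ε l)).congr' ?_ (by simp)
  filter_upwards [hε0] with x hx
  rw [← Real.rpow_add_one' hx (by linarith), sub_add_cancel]

lemma isLittleO_rpow_of_isBigO_rpow {A ν : α → ℝ} {s t : ℝ} (hε0 : 0 ≤ᶠ[l] ε)
    (hε : Tendsto ε l (𝓝 0)) (hν0 : 0 ≤ᶠ[l] ν) (hνε : ν =O[l] ε)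
    (hA : A =O[l] fun x => ν x ^ s) (ht : 0 ≤ t) (hst : 1 < s * t) :
    (fun x => A x ^ t) =o[l] ε := by
  refine ((hA.rpow ht (hν0.mono fun x h => Real.rpow_nonneg h s)).congr' .rfl ?_).trans_isLittleO
    (isLittleO_rpow_of_isBigO hε0 hε hνε hst)
  filter_upwards [hν0] with x hx
  rw [← Real.rpow_mul hx]

lemma eventually_neg_of_isLittleO {f ν : α → ℝ} {ρ : ℝ} (hε0 : 0 ≤ᶠ[l] ε)
    (h : (fun x => f x - (ε x - ν x / 2)) =o[l] ε) (hρ : 2 < ρ)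
    (hlim : Tendsto (fun x => ν x / ε x) l (𝓝 ρ)) :
    ∀ᶠ x in l, f x < 0 := by
  have hη : 0 < (ρ - 2) / 4 := by linarith
  filter_upwards [hε0, h.bound hη,
    hlim.eventually (eventually_gt_nhds (by linarith : ρ - (ρ - 2) / 4 < ρ))] with x hx hf hν
  have hεx : 0 < ε x := by
    refine (show 0 ≤ ε x from hx).lt_of_ne fun h0 => ?_
    rw [← h0, div_zero] at hν
    linarith
  have hνx : (ρ - (ρ - 2) / 4) * ε x < ν x := (lt_div_iff₀ hεx).mp hν
  rw [Real.norm_eq_abs, Real.norm_of_nonneg hεx.le] at hf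
  nlinarith [(abs_le.mp hf).2, mul_pos (sub_pos.mpr hρ) hεx]

lemma isLittleO_logMeanErrorBound {ν A B : α → ℝ} {p : ℝ} (hp : 3 < p) (hε0 : 0 ≤ᶠ[l] ε)
    (hε : Tendsto ε l (𝓝 0)) (hν0 : 0 ≤ᶠ[l] ν) (hνε : ν =O[l] ε)
    (hA : A =O[l] fun x => ν x ^ (p / 2)) (hB : B =O[l] fun _ => (1 : ℝ)) :
    (fun x => logMeanErrorBound p (ε x) (A x) (B x)) =o[l] ε := by
  have hp0 : 0 < p := by linarith
  have hεpow : ∀ n : ℕ, 1 < n → (fun x => ε x ^ n) =o[l] ε := fun n hn => by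
    simpa only [Real.rpow_natCast] using
      isLittleO_rpow_of_isBigO hε0 hε (isBigO_refl ε _) (r := n) (by exact_mod_cast hn)
  have hA3 : (fun x => A x ^ (3 / p)) =o[l] ε :=
    isLittleO_rpow_of_isBigO_rpow hε0 hε hν0 hνε hA (by positivity) (by field_simp; linarith)
  have hAp : (fun x => A x ^ ((p - 1) / p)) =o[l] ε :=
    isLittleO_rpow_of_isBigO_rpow hε0 hε hν0 hνε hA (div_nonneg (by linarith) hp0.le)
      (by field_simp; linarith)
  have hBp : (fun x => B x ^ (1 / p)) =O[l] fun _ => (1 : ℝ) := by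
    simpa only [Real.one_rpow] using hB.rpow (by positivity) (.of_forall fun _ => zero_le_one)
  have hBA := (hBp.mul_isLittleO hAp).congr_right fun x => one_mul (ε x)
  exact (((hεpow 2 one_lt_two).add (hA3.const_mul_left 8)).add
    ((hεpow 3 (by norm_num)).const_mul_left 8)).add (hBA.const_mul_left _)

end Asymptotics

section LogMoment

variable {Ω : Type*} [MeasurableSpace Ω] {μ : Measure Ω} [IsProbabilityMeasure μ] {M : Ω → ℝ}

lemma integral_log_sub_eq (hM : MemLp M 2 μ) (hlog : Integrable (fun ω => Real.log (M ω)) μ) :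
    ∫ ω, Real.log (M ω) ∂μ - ((μ[M] - 1) - Var[M; μ] / 2) =
      ∫ ω, logTaylorRemainder (M ω) ∂μ - (μ[M] - 1) ^ 2 / 2 := by
  have hM1 : MemLp (fun ω => M ω - 1) 2 μ := hM.sub (memLp_const 1)
  have hmean : ∫ ω, (M ω - 1) ∂μ = μ[M] - 1 := by
    rw [integral_sub (hM.integrable one_le_two) (integrable_const 1)]
    simp
  have hsq : ∫ ω, (M ω - 1) ^ 2 ∂μ = Var[M; μ] + (μ[M] - 1) ^ 2 := by
    have h := variance_eq_sub hM1
    rw [variance_sub_const hM.aestronglyMeasurable] at h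
    simp only [Pi.pow_apply, hmean] at h
    linarith
  have hpoly : Integrable (fun ω => (M ω - 1) - (M ω - 1) ^ 2 / 2) μ :=
    (hM1.integrable one_le_two).sub (hM1.integrable_sq.div_const 2)
  unfold logTaylorRemainder
  rw [integral_sub hlog hpoly,
    integral_sub (hM1.integrable one_le_two) (hM1.integrable_sq.div_const 2), integral_div,
    hmean, hsq]
  ring

lemma abs_integral_logTaylorRemainder_le {c p : ℝ} (hc : 1 ≤ c) (hp : 3 ≤ p)
    (hM : AEStronglyMeasurable M μ) (hMpos : ∀ᵐ ω ∂μ, 0 < M ω)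
    (hMp : Integrable (fun ω => M ω ^ (-p)) μ) (hXp : Integrable (fun ω => |M ω - c| ^ p) μ) :
    |∫ ω, logTaylorRemainder (M ω) ∂μ| ≤
      8 * (∫ ω, |M ω - c| ^ p ∂μ) ^ (3 / p) + 8 * (c - 1) ^ 3 + 2 * 2 ^ (p - 1) *
        ((∫ ω, M ω ^ (-p) ∂μ) ^ (1 / p) * (∫ ω, |M ω - c| ^ p ∂μ) ^ ((p - 1) / p)) := by
  have hX : AEStronglyMeasurable (fun ω => M ω - c) μ := hM.sub aestronglyMeasurable_const
  have hinv0 : 0 ≤ᵐ[μ] fun ω => (M ω)⁻¹ := hMpos.mono fun ω h => (inv_pos.mpr h).le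
  have hinv : AEStronglyMeasurable (fun ω => (M ω)⁻¹) μ :=
    hM.aemeasurable.inv.aestronglyMeasurable
  have hinvp_eq : (fun ω => (M ω)⁻¹ ^ p) =ᵐ[μ] fun ω => M ω ^ (-p) := by
    filter_upwards [hMpos] with ω h
    rw [Real.inv_rpow h.le, Real.rpow_neg h.le]
  have hinvp : Integrable (fun ω => (M ω)⁻¹ ^ p) μ := hMp.congr hinvp_eq.symm
  have hV : AEStronglyMeasurable (fun ω => |M ω - c|) μ :=
    continuous_abs.comp_aestronglyMeasurable hX
  have hV0 : 0 ≤ᵐ[μ] fun ω => |M ω - c| := ae_of_all _ fun ω => abs_nonneg _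
  have hcube : Integrable (fun ω => |M ω - c| ^ 3) μ := by
    have h := integrable_norm_rpow_of_le hX (by norm_num : (0 : ℝ) ≤ 3) (by linarith) hp
      (by simpa only [Real.norm_eq_abs] using hXp)
    simpa only [Real.norm_eq_abs, Real.rpow_ofNat] using h
  have hlyap : ∫ ω, |M ω - c| ^ 3 ∂μ ≤ (∫ ω, |M ω - c| ^ p ∂μ) ^ (3 / p) := by
    simpa only [Real.rpow_ofNat] using integral_abs_rpow_le (by norm_num) hp hX hXp
  have hholder := integral_mul_rpow_sub_one_le (by linarith) hinv0 hV0 hinv hV hinvp hXp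
  rw [integral_congr_ae hinvp_eq] at hholder
  have hnear : Integrable (fun ω => 8 * |M ω - c| ^ 3) μ := hcube.const_mul 8
  have hnear' : Integrable (fun ω => 8 * |M ω - c| ^ 3 + 8 * (c - 1) ^ 3) μ :=
    hnear.add (integrable_const _)
  have hfar : Integrable (fun ω => 2 * 2 ^ (p - 1) * ((M ω)⁻¹ * |M ω - c| ^ (p - 1))) μ :=
    (integrable_mul_rpow_sub_one (by linarith) hinv0 hV0 hinv hV hinvp hXp).const_mul _
  have hpt : ∀ᵐ ω ∂μ, ‖logTaylorRemainder (M ω)‖ ≤ 8 * |M ω - c| ^ 3 + 8 * (c - 1) ^ 3 +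
      2 * 2 ^ (p - 1) * ((M ω)⁻¹ * |M ω - c| ^ (p - 1)) := by
    filter_upwards [hMpos] with ω h
    exact abs_logTaylorRemainder_le h hc (by linarith)
  calc |∫ ω, logTaylorRemainder (M ω) ∂μ|
      ≤ ∫ ω, (8 * |M ω - c| ^ 3 + 8 * (c - 1) ^ 3 +
          2 * 2 ^ (p - 1) * ((M ω)⁻¹ * |M ω - c| ^ (p - 1))) ∂μ :=
        norm_integral_le_of_norm_le (hnear'.add hfar) hpt
    _ = 8 * ∫ ω, |M ω - c| ^ 3 ∂μ + 8 * (c - 1) ^ 3 +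
          2 * 2 ^ (p - 1) * ∫ ω, (M ω)⁻¹ * |M ω - c| ^ (p - 1) ∂μ := by
        rw [integral_add hnear' hfar, integral_add hnear (integrable_const _)]
        simp [integral_const_mul]
    _ ≤ _ := by gcongr

lemma abs_integral_log_sub_le {p : ℝ} (hp : 3 ≤ p) (hM : MemLp M 2 μ)
    (hMpos : ∀ᵐ ω ∂μ, 0 < M ω) (hmean : 1 ≤ μ[M]) (hMp : Integrable (fun ω => M ω ^ (-p)) μ)
    (hXp : Integrable (fun ω => |M ω - μ[M]| ^ p) μ) :
    |∫ ω, Real.log (M ω) ∂μ - ((μ[M] - 1) - Var[M; μ] / 2)| ≤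
      logMeanErrorBound p (μ[M] - 1) (∫ ω, |M ω - μ[M]| ^ p ∂μ) (∫ ω, M ω ^ (-p) ∂μ) := by
  have hlog := integrable_log_of_integrable_rpow_neg (by linarith) (hM.integrable one_le_two)
    hMpos hMp
  have hrem := abs_integral_logTaylorRemainder_le hmean hp hM.aestronglyMeasurable hMpos hMp hXp
  rw [integral_log_sub_eq hM hlog]
  refine (abs_sub _ _).trans ?_
  rw [abs_of_nonneg (by positivity : (0 : ℝ) ≤ (μ[M] - 1) ^ 2 / 2), logMeanErrorBound]
  linarith [sq_nonneg (μ[M] - 1)]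

end LogMoment

theorem log_mean_expansion_general
    {Ω : Type} [MeasurableSpace Ω]
    -- for each `N`, a probability space carrying the random mean `M = F'(1)`
    (μ : ℕ → Measure Ω) (hprob : ∀ N, IsProbabilityMeasure (μ N))
    (M : ℕ → Ω → ℝ)
    (hMpos : ∀ N, ∀ᵐ ω ∂ μ N, 0 < M N ω)
    -- `ε_N = E[F'(1)] - 1`, `ν_N = Var(F'(1))`
    (ε ν : ℕ → ℝ)
    (hML2 : ∀ N, MemLp (M N) 2 (μ N))
    (hεdef : ∀ N, ε N = (∫ ω, M N ω ∂ μ N) - 1)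
    (hνdef : ∀ N, ν N = variance (M N) (μ N))
    (hε0 : ∀ N, 0 ≤ ε N) (hεlim : Tendsto ε atTop (𝓝 0))
    (hνO : ν =O[atTop] ε)
    -- moment assumptions: for some `δ > 0`, `E[F'(1)^{-4-δ}] = O(1)` and
    -- `E[|F'(1) - E F'(1)|^{4+δ}] = O(ν_N^{2+δ/2})`
    (hmom : ∃ δ > (0 : ℝ),
      (∀ N, Integrable (fun ω => M N ω ^ (-(4 + δ))) (μ N)) ∧
      ((fun N => ∫ ω, M N ω ^ (-(4 + δ)) ∂ μ N) =O[atTop] (fun _ => (1 : ℝ))) ∧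
      (∀ N, Integrable (fun ω => |M N ω - ∫ ω', M N ω' ∂ μ N| ^ (4 + δ)) (μ N)) ∧
      ((fun N => ∫ ω, |M N ω - ∫ ω', M N ω' ∂ μ N| ^ (4 + δ) ∂ μ N)
        =O[atTop] (fun N => ν N ^ (2 + δ / 2))))
    : ((fun N => (∫ ω, Real.log (M N ω) ∂ μ N) - (ε N - ν N / 2)) =o[atTop] ε) ∧
      (∀ ρ : ℝ, 2 < ρ → Tendsto (fun N => ν N / ε N) atTop (𝓝 ρ) →
        ∀ᶠ N in atTop, (∫ ω, Real.log (M N ω) ∂ μ N) < 0) := by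
  obtain ⟨δ, hδ, hnegInt, hnegO, hcentInt, hcentO⟩ := hmom
  have hε0' : 0 ≤ᶠ[atTop] ε := .of_forall hε0
  have hν0 : 0 ≤ᶠ[atTop] ν := .of_forall fun N => hνdef N ▸ variance_nonneg _ _
  have hA : (fun N => ∫ ω, |M N ω - ∫ ω', M N ω' ∂μ N| ^ (4 + δ) ∂μ N)
      =O[atTop] fun N => ν N ^ ((4 + δ) / 2) := by
    simpa only [show 2 + δ / 2 = (4 + δ) / 2 by ring] using hcentO
  have hexp : (fun N => ∫ ω, Real.log (M N ω) ∂μ N - (ε N - ν N / 2)) =o[atTop] ε := by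
    refine (IsBigO.of_bound' (.of_forall fun N => ?_)).trans_isLittleO
      (isLittleO_logMeanErrorBound (by linarith) hε0' hεlim hν0 hνO hA hnegO)
    have := hprob N
    rw [hεdef N, hνdef N, Real.norm_eq_abs]
    exact (abs_integral_log_sub_le (by linarith) (hML2 N) (hMpos N)
      (by linarith [hεdef N, hε0 N]) (hnegInt N) (hcentInt N)).trans (le_abs_self _)
  exact ⟨hexp, fun ρ hρ hlim => eventually_neg_of_isLittleO hε0' hexp hρ hlim⟩

/-- **Expansion of the logarithmic mean of the environment** (from the proof of
Theorem 1 iii)): under the moment assumptions on `F'(1)` with `ε_N ≥ 0`, `ε_N → 0` and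
`ν_N = O(ε_N)`: `E[log F'(1)] = ε_N - ν_N/2 + o(ε_N)`.  In particular, if
`ν_N / ε_N → ρ` with `ρ > 2`, then `E[log F'(1)] < 0` for all sufficiently large
`N`. -/
theorem log_mean_expansion
    {Ω : Type} [MeasurableSpace Ω]
    -- for each `N`, a probability space carrying the random mean `M = F'(1)`
    (μ : ℕ → Measure Ω) (hprob : ∀ N, IsProbabilityMeasure (μ N))
    (M : ℕ → Ω → ℝ)
    (hMmeas : ∀ N, Measurable (M N))
    (hMpos : ∀ N, ∀ᵐ ω ∂ μ N, 0 < M N ω)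
    -- `ε_N = E[F'(1)] - 1`, `ν_N = Var(F'(1))`
    (ε ν : ℕ → ℝ)
    (hMint : ∀ N, Integrable (M N) (μ N)) (hML2 : ∀ N, MemLp (M N) 2 (μ N))
    (hεdef : ∀ N, ε N = (∫ ω, M N ω ∂ μ N) - 1)
    (hνdef : ∀ N, ν N = variance (M N) (μ N))
    (hε0 : ∀ N, 0 ≤ ε N) (hεlim : Tendsto ε atTop (𝓝 0))
    (hνO : ν =O[atTop] ε)
    -- moment assumptions: for some `δ > 0`, `E[F'(1)^{-4-δ}] = O(1)` and
    -- `E[|F'(1) - E F'(1)|^{4+δ}] = O(ν_N^{2+δ/2})`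
    (hmom : ∃ δ > (0 : ℝ),
      (∀ N, Integrable (fun ω => M N ω ^ (-(4 + δ))) (μ N)) ∧
      ((fun N => ∫ ω, M N ω ^ (-(4 + δ)) ∂ μ N) =O[atTop] (fun _ => (1 : ℝ))) ∧
      (∀ N, Integrable (fun ω => |M N ω - ∫ ω', M N ω' ∂ μ N| ^ (4 + δ)) (μ N)) ∧
      ((fun N => ∫ ω, |M N ω - ∫ ω', M N ω' ∂ μ N| ^ (4 + δ) ∂ μ N)
        =O[atTop] (fun N => ν N ^ (2 + δ / 2))))
    : ((fun N => (∫ ω, Real.log (M N ω) ∂ μ N) - (ε N - ν N / 2)) =o[atTop] ε) ∧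
      (∀ ρ : ℝ, 2 < ρ → Tendsto (fun N => ν N / ε N) atTop (𝓝 ρ) →
        ∀ᶠ N in atTop, (∫ ω, Real.log (M N ω) ∂ μ N) < 0) :=
  log_mean_expansion_general μ hprob M hMpos ε ν hML2 hεdef hνdef hε0 hεlim hνO hmom
end
end
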